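/- Let X be a noetherian scheme, s a natural number, and let Z ⊆ Z' ⊆ X be closed subsets with codim(Z', X) ≥ s and codim(Z, X) ≥ s + 1. Let T be the (finite) set of generic points of those irreducible components of Z' that have codimension exactly s in X. Then there exists a closed subset Ẑ of X with Z ⊆ Ẑ ⊆ Z' such that: (i) codim(Ẑ, X) ≥ s + 1; (ii) Z' = Ẑ ∪ ⋃_{t ∈ T} closure({t}); (iii) for any two distinct points t ≠ t' in T one has closure({t}) ∩ closure({t'}) ⊆ Ẑ, so the sets closure({t}) \ Ẑ for t ∈ T are pairwise disjoint; and (iv) t ∉ Ẑ for every t ∈ T. In particular, U := X \ Ẑ is an open neighbourhood of T in which the intersection of closure(T) with U splits into the disjoint union of the closures of the points of T in U. -/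

import Mathlib

/-!
Take `Ẑ` to be the union of `Z`, of the components of `Z'` whose codimension is not `s`, and of
the intersections of pairs of distinct components of `Z'`. Each of these finitely many closed
pieces has codimension `≥ s + 1`: for `Z` by hypothesis, for the components because their
codimension is `≥ s`, and for `C ∩ C'` because it is a proper closed subset of the component
`C`, and passing to a proper irreducible closed subset raises the codimension. In particular no
codimension-`s` component lies in a piece, so its generic point avoids `Ẑ`; the remaining
properties hold by construction.
-/

open Set AlgebraicGeometry

/-- The codimension of an irreducible closed subset `Z` of a topological space `X`:
the supremum of all `s : ℕ` such that there is a chain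
`Z = Z_s ⊊ Z_{s-1} ⊊ … ⊊ Z_0 ⊆ X` of nonempty irreducible closed subsets of `X`. -/
noncomputable def irredCodim {X : Type*} [TopologicalSpace X] (Z : Set X) : ℕ∞ :=
  sSup {n : ℕ∞ | ∃ s : ℕ, n = (s : ℕ∞) ∧ ∃ c : Fin (s + 1) → Set X,
    c 0 = Z ∧ StrictMono c ∧ ∀ i, IsClosed (c i) ∧ IsIrreducible (c i)}

/-- The irreducible components of a subset `Z` of a topological space `X`, i.e. the
maximal irreducible subsets of `Z`. -/
def irredComponentsIn {X : Type*} [TopologicalSpace X] (Z : Set X) : Set (Set X) :=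
  {C | Maximal (fun T => T ⊆ Z ∧ IsIrreducible T) C}

/-- The codimension of an arbitrary closed subset `Z ⊆ X`: the infimum of the
codimensions of the irreducible components of `Z`; by convention `codim(∅, X) = ∞`
(the infimum of the empty set in `ℕ∞`). -/
noncomputable def setCodim {X : Type*} [TopologicalSpace X] (Z : Set X) : ℕ∞ :=
  sInf (irredCodim '' irredComponentsIn Z)

/-- The set of generic points of those irreducible components of `Z'` that have
codimension exactly `s` in the ambient space. -/
def genericPtsOfCodim {X : Type*} [TopologicalSpace X] (Z' : Set X) (s : ℕ) : Set X :=
  {t | ∃ C ∈ irredComponentsIn Z', IsGenericPoint t C ∧ irredCodim C = (s : ℕ∞)}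

open TopologicalSpace

section Codimension

variable {Y : Type*} [TopologicalSpace Y]

theorem irredCodim_eq_coheight (Z : IrreducibleCloseds Y) :
    irredCodim (Z : Set Y) = Order.coheight Z := by
  rw [Order.coheight_eq_iSup_head_eq]
  apply le_antisymm
  · refine sSup_le ?_
    rintro _ ⟨n, rfl, c, hc0, hmono, hc⟩
    let p : LTSeries (IrreducibleCloseds Y) :=
      LTSeries.mk n (fun i => ⟨c i, (hc i).2, (hc i).1⟩) fun i j hij => hmono hij
    exact le_iSup₂_of_le p (IrreducibleCloseds.ext hc0) le_rfl
  · refine iSup₂_le fun p hp => le_sSup ⟨p.length, rfl, fun i => p i, by rw [← hp]; rfl,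
      SetLike.coe_strictMono.comp p.strictMono, fun i => ⟨(p i).isClosed, (p i).isIrreducible⟩⟩

theorem irredCodim_anti {W V : Set Y} (hW : IsIrreducible W) (hWc : IsClosed W)
    (hV : IsIrreducible V) (hVc : IsClosed V) (h : W ⊆ V) : irredCodim V ≤ irredCodim W := by
  lift W to IrreducibleCloseds Y using ⟨hW, hWc⟩
  lift V to IrreducibleCloseds Y using ⟨hV, hVc⟩
  simpa only [irredCodim_eq_coheight] using Order.coheight_anti (α := IrreducibleCloseds Y) h

theorem irredCodim_add_one_le {W V : Set Y} (hW : IsIrreducible W) (hWc : IsClosed W)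
    (hV : IsIrreducible V) (hVc : IsClosed V) (h : W ⊂ V) :
    irredCodim V + 1 ≤ irredCodim W := by
  lift W to IrreducibleCloseds Y using ⟨hW, hWc⟩
  lift V to IrreducibleCloseds Y using ⟨hV, hVc⟩
  simpa only [irredCodim_eq_coheight] using Order.coheight_add_one_le (α := IrreducibleCloseds Y) h

end Codimension

section Components

variable {Y : Type*} [TopologicalSpace Y] {Z C : Set Y}

theorem IsIrreducible.exists_subset_of_subset_sUnion {W : Set Y} (hW : IsIrreducible W)
    {S : Set (Set Y)} (hS : S.Finite) (hcl : ∀ t ∈ S, IsClosed t) (h : W ⊆ ⋃₀ S) :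
    ∃ t ∈ S, W ⊆ t := by
  lift S to Finset (Set Y) using hS
  exact isIrreducible_iff_sUnion_isClosed.mp hW S hcl h

theorem isClosed_of_mem_irredComponentsIn (hZ : IsClosed Z) (hC : C ∈ irredComponentsIn Z) :
    IsClosed C :=
  isClosed_of_closure_subset <|
    hC.2 ⟨hZ.closure_subset_iff.mpr hC.1.1, hC.1.2.closure⟩ subset_closure

theorem eq_of_mem_irredComponentsIn_of_subset (hC : C ∈ irredComponentsIn Z) {D : Set Y}
    (hD : IsIrreducible D) (hDZ : D ⊆ Z) (hCD : C ⊆ D) : C = D :=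
  Maximal.eq_of_subset (P := fun T => T ⊆ Z ∧ IsIrreducible T) hC ⟨hDZ, hD⟩ hCD

variable [NoetherianSpace Y]

theorem finite_irredComponentsIn (hZ : IsClosed Z) : (irredComponentsIn Z).Finite := by
  obtain ⟨S, hSf, hSc, hSi, rfl⟩ := NoetherianSpace.exists_finite_set_isClosed_irreducible hZ
  refine hSf.subset fun C hC => ?_
  obtain ⟨F, hFS, hCF⟩ := hC.1.2.exists_subset_of_subset_sUnion hSf hSc hC.1.1
  rwa [eq_of_mem_irredComponentsIn_of_subset hC (hSi F hFS) (subset_sUnion_of_mem hFS) hCF]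

theorem IsIrreducible.exists_mem_irredComponentsIn_superset (hZ : IsClosed Z) {T : Set Y}
    (hT : IsIrreducible T) (hTZ : T ⊆ Z) : ∃ C ∈ irredComponentsIn Z, T ⊆ C := by
  obtain ⟨S, hSf, hSc, hSi, rfl⟩ := NoetherianSpace.exists_finite_set_isClosed_irreducible hZ
  obtain ⟨F, hFS, hTF⟩ := hT.exists_subset_of_subset_sUnion hSf hSc hTZ
  -- A maximal piece `M ⊇ T` of the finite cover is a component: an irreducible `T' ⊇ M` inside
  -- `Z` lies in some piece, which by maximality is `M` itself.
  obtain ⟨M, hM⟩ := (hSf.subset (sep_subset S (T ⊆ ·))).exists_maximal ⟨F, hFS, hTF⟩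
  refine ⟨M, ⟨⟨subset_sUnion_of_mem hM.1.1, hSi M hM.1.1⟩, fun T' hT' hMT' => ?_⟩, hM.1.2⟩
  obtain ⟨F', hF'S, hT'F'⟩ := hT'.2.exists_subset_of_subset_sUnion hSf hSc hT'.1
  exact hT'F'.trans (hM.2 ⟨hF'S, hM.1.2.trans (hMT'.trans hT'F')⟩ (hMT'.trans hT'F'))

theorem setCodim_le_irredCodim (hZ : IsClosed Z) {W : Set Y} (hW : IsIrreducible W)
    (hWc : IsClosed W) (hWZ : W ⊆ Z) : setCodim Z ≤ irredCodim W := by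
  obtain ⟨C, hC, hWC⟩ := hW.exists_mem_irredComponentsIn_superset hZ hWZ
  exact (sInf_le (mem_image_of_mem _ hC)).trans
    (irredCodim_anti hW hWc hC.1.2 (isClosed_of_mem_irredComponentsIn hZ hC) hWC)

end Components

section BadLocus

variable {Y : Type*} [TopologicalSpace Y]

def badPieces (Z Z' : Set Y) (s : ℕ) : Set (Set Y) :=
  insert Z ({C ∈ irredComponentsIn Z' | irredCodim C ≠ s} ∪
    {A | ∃ C ∈ irredComponentsIn Z', ∃ C' ∈ irredComponentsIn Z', C ≠ C' ∧ A = C ∩ C'})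

def badLocus (Z Z' : Set Y) (s : ℕ) : Set Y :=
  ⋃₀ badPieces Z Z' s

variable {Z Z' : Set Y} {s : ℕ}

theorem subset_badLocus : Z ⊆ badLocus Z Z' s :=
  subset_sUnion_of_mem (mem_insert Z _)

theorem badLocus_subset (hZZ' : Z ⊆ Z') : badLocus Z Z' s ⊆ Z' := by
  refine sUnion_subset fun q hq => ?_
  rcases hq with rfl | ⟨hq, -⟩ | ⟨C, hC, C', -, -, rfl⟩
  exacts [hZZ', hq.1.1, inter_subset_left.trans hC.1.1]

theorem closure_inter_closure_subset_badLocus [T0Space Y] {t t' : Y}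
    (ht : t ∈ genericPtsOfCodim Z' s) (ht' : t' ∈ genericPtsOfCodim Z' s) (hne : t ≠ t') :
    closure {t} ∩ closure {t'} ⊆ badLocus Z Z' s := by
  obtain ⟨C, hC, hgen, -⟩ := ht
  obtain ⟨C', hC', hgen', -⟩ := ht'
  have hCC' : C ≠ C' := fun h => hne (hgen.eq (h ▸ hgen'))
  rw [hgen.def, hgen'.def]
  exact subset_sUnion_of_mem (mem_insert_of_mem _ (Or.inr ⟨C, hC, C', hC', hCC', rfl⟩))

theorem isClosed_of_mem_badPieces (hZ : IsClosed Z) (hZ' : IsClosed Z') {q : Set Y}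
    (hq : q ∈ badPieces Z Z' s) : IsClosed q := by
  rcases hq with rfl | ⟨hq, -⟩ | ⟨C, hC, C', hC', -, rfl⟩
  · exact hZ
  · exact isClosed_of_mem_irredComponentsIn hZ' hq
  · exact (isClosed_of_mem_irredComponentsIn hZ' hC).inter
      (isClosed_of_mem_irredComponentsIn hZ' hC')

variable [NoetherianSpace Y]

theorem finite_badPieces (hZ' : IsClosed Z') : (badPieces Z Z' s).Finite := by
  have hfin := finite_irredComponentsIn hZ'
  refine ((hfin.subset (sep_subset _ _)).union ?_).insert Z
  refine (hfin.image2 (· ∩ ·) hfin).subset ?_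
  rintro _ ⟨C, hC, C', hC', -, rfl⟩
  exact mem_image2_of_mem hC hC'

theorem isClosed_badLocus (hZ : IsClosed Z) (hZ' : IsClosed Z') :
    IsClosed (badLocus Z Z' s) := by
  rw [badLocus, sUnion_eq_biUnion]
  exact (finite_badPieces hZ').isClosed_biUnion fun _ => isClosed_of_mem_badPieces hZ hZ'

theorem add_one_le_irredCodim_of_subset_mem_badPieces (hZ : IsClosed Z) (hZ' : IsClosed Z')
    (hcodimZ' : (s : ℕ∞) ≤ setCodim Z') (hcodimZ : (s : ℕ∞) + 1 ≤ setCodim Z) {W q : Set Y}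
    (hW : IsIrreducible W) (hWc : IsClosed W) (hq : q ∈ badPieces Z Z' s) (hWq : W ⊆ q) :
    (s : ℕ∞) + 1 ≤ irredCodim W := by
  have hcodim : ∀ C ∈ irredComponentsIn Z', (s : ℕ∞) ≤ irredCodim C := fun C hC =>
    hcodimZ'.trans (sInf_le (mem_image_of_mem _ hC))
  rcases hq with rfl | ⟨hC, hCs⟩ | ⟨C, hC, C', hC', hCC', rfl⟩
  · exact hcodimZ.trans (setCodim_le_irredCodim hZ hW hWc hWq)
  · calc (s : ℕ∞) + 1 ≤ irredCodim q :=
          Order.add_one_le_of_lt ((hcodim q hC).lt_of_ne (Ne.symm hCs))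
      _ ≤ irredCodim W :=
          irredCodim_anti hW hWc hC.1.2 (isClosed_of_mem_irredComponentsIn hZ' hC) hWq
  · have hWC : W ⊂ C := by
      refine (hWq.trans inter_subset_left).ssubset_of_ne fun hWC => hCC' ?_
      exact eq_of_mem_irredComponentsIn_of_subset hC hC'.1.2 hC'.1.1
        (hWC ▸ hWq.trans inter_subset_right)
    calc (s : ℕ∞) + 1 ≤ irredCodim C + 1 := add_le_add_left (hcodim C hC) 1
      _ ≤ irredCodim W :=
        irredCodim_add_one_le hW hWc hC.1.2 (isClosed_of_mem_irredComponentsIn hZ' hC) hWC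

theorem le_setCodim_badLocus (hZ : IsClosed Z) (hZ' : IsClosed Z')
    (hcodimZ' : (s : ℕ∞) ≤ setCodim Z') (hcodimZ : (s : ℕ∞) + 1 ≤ setCodim Z) :
    (s : ℕ∞) + 1 ≤ setCodim (badLocus Z Z' s) := by
  refine le_sInf ?_
  rintro _ ⟨W, hW, rfl⟩
  obtain ⟨q, hq, hWq⟩ := hW.1.2.exists_subset_of_subset_sUnion (finite_badPieces hZ')
    (fun _ => isClosed_of_mem_badPieces hZ hZ') hW.1.1
  exact add_one_le_irredCodim_of_subset_mem_badPieces hZ hZ' hcodimZ' hcodimZ hW.1.2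
    (isClosed_of_mem_irredComponentsIn (isClosed_badLocus hZ hZ') hW) hq hWq

theorem notMem_badLocus (hZ : IsClosed Z) (hZ' : IsClosed Z')
    (hcodimZ' : (s : ℕ∞) ≤ setCodim Z') (hcodimZ : (s : ℕ∞) + 1 ≤ setCodim Z) {t : Y}
    (ht : t ∈ genericPtsOfCodim Z' s) : t ∉ badLocus Z Z' s := by
  rintro ⟨q, hq, htq⟩
  obtain ⟨C, hC, hgen, hCs⟩ := ht
  have hqc := isClosed_of_mem_badPieces hZ hZ' hq
  have hCq : C ⊆ q := hgen.def ▸ hqc.closure_subset_iff.mpr (singleton_subset_iff.mpr htq)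
  have := add_one_le_irredCodim_of_subset_mem_badPieces hZ hZ' hcodimZ' hcodimZ hC.1.2
    (isClosed_of_mem_irredComponentsIn hZ' hC) hq hCq
  rw [hCs, ENat.add_one_le_iff (ENat.natCast_ne_top s)] at this
  exact this.false

theorem subset_badLocus_union_closure_genericPtsOfCodim [QuasiSober Y] (hZ' : IsClosed Z') :
    Z' ⊆ badLocus Z Z' s ∪ ⋃ t ∈ genericPtsOfCodim Z' s, closure {t} := by
  intro x hx
  obtain ⟨C, hC, hxC⟩ := isIrreducible_singleton.exists_mem_irredComponentsIn_superset hZ'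
    (singleton_subset_iff.mpr hx)
  by_cases hCs : irredCodim C = s
  · obtain ⟨t, ht⟩ := QuasiSober.sober hC.1.2 (isClosed_of_mem_irredComponentsIn hZ' hC)
    exact Or.inr (mem_biUnion ⟨C, hC, ht, hCs⟩ (ht.def ▸ hxC rfl))
  · exact Or.inl ⟨C, mem_insert_of_mem _ (Or.inl ⟨hC, hCs⟩), hxC rfl⟩

end BadLocus

/-- Let `X` be a noetherian scheme, `s` a natural number, and `Z ⊆ Z' ⊆ X` closed
subsets with `codim(Z', X) ≥ s` and `codim(Z, X) ≥ s + 1`.  Let `T` be the set of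
generic points of those irreducible components of `Z'` that have codimension exactly
`s` in `X`.  Then there exists a closed subset `Ẑ` of `X` with `Z ⊆ Ẑ ⊆ Z'` such that:
(i) `codim(Ẑ, X) ≥ s + 1`; (ii) `Z' = Ẑ ∪ ⋃_{t ∈ T} closure {t}`; (iii) for any two
distinct points `t ≠ t'` in `T` one has `closure {t} ∩ closure {t'} ⊆ Ẑ` (so the sets
`closure {t} \ Ẑ` for `t ∈ T` are pairwise disjoint); and (iv) `t ∉ Ẑ` for every
`t ∈ T`. -/
theorem stmt5 (X : Scheme) [IsNoetherian X] (s : ℕ) (Z Z' : Set X)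
    (hZcl : IsClosed Z) (hZ'cl : IsClosed Z') (hsub : Z ⊆ Z')
    (hZ' : (s : ℕ∞) ≤ setCodim Z') (hZ : (s : ℕ∞) + 1 ≤ setCodim Z) :
    ∃ Zhat : Set X, IsClosed Zhat ∧ Z ⊆ Zhat ∧ Zhat ⊆ Z' ∧
      (s : ℕ∞) + 1 ≤ setCodim Zhat ∧
      Z' = Zhat ∪ (⋃ t ∈ genericPtsOfCodim Z' s, closure {t}) ∧
      (∀ t ∈ genericPtsOfCodim Z' s, ∀ t' ∈ genericPtsOfCodim Z' s, t ≠ t' →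
        closure {t} ∩ closure {t'} ⊆ Zhat) ∧
      (genericPtsOfCodim Z' s).Pairwise (fun t t' =>
        Disjoint (closure {t} \ Zhat) (closure {t'} \ Zhat)) ∧
      ∀ t ∈ genericPtsOfCodim Z' s, t ∉ Zhat := by
  have hdisj : ∀ t ∈ genericPtsOfCodim Z' s, ∀ t' ∈ genericPtsOfCodim Z' s, t ≠ t' →
      closure {t} ∩ closure {t'} ⊆ badLocus Z Z' s :=
    fun _ ht _ ht' => closure_inter_closure_subset_badLocus ht ht'
  refine ⟨badLocus Z Z' s, isClosed_badLocus hZcl hZ'cl, subset_badLocus, badLocus_subset hsub,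
    le_setCodim_badLocus hZcl hZ'cl hZ' hZ, ?_, hdisj, ?_,
    fun _ => notMem_badLocus hZcl hZ'cl hZ' hZ⟩
  · refine (subset_badLocus_union_closure_genericPtsOfCodim hZ'cl).antisymm
      (union_subset (badLocus_subset hsub) (iUnion₂_subset fun t ht => ?_))
    obtain ⟨C, hC, hgen, -⟩ := ht
    exact hgen.def ▸ hC.1.1
  · exact fun t ht t' ht' hne => disjoint_left.mpr fun x hx hx' =>
      hx.2 (hdisj t ht t' ht' hne ⟨hx.1, hx'.1⟩)
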